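/- Let n ≥ 2, let a₀,…,aₙ be nonzero complex numbers, bⱼ ∈ ℂ with bⱼ² = aⱼ, and let X be the spherical-coordinate parametrization of the quadric. Define N : ℂⁿ → ℂⁿ⁺¹ by N(u) := (b₀⁻¹C₀(u), b₁⁻¹C₁(u)sin(u¹), …, bₙ⁻¹Cₙ(u)sin(uⁿ)). Then N is a normal field of X whose second fundamental form is diagonal with entries −Cₖ²: for all u ∈ ℂⁿ and all 1 ≤ j, k ≤ n, ⟨N(u), ∂ⱼX(u)⟩ = 0 and ⟨N(u), ∂ⱼ∂ₖX(u)⟩ = −δ_{jk}·Cₖ(u)², where ∂ⱼ denotes the directional derivative along the j-th standard basis vector of ℂⁿ. -/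

import Mathlib

noncomputable section

open Complex Finset

/-- Complex bilinear (non-Hermitian) dot product on ℂᵐ. -/
def cdot {m : ℕ} (x y : Fin m → ℂ) : ℂ := ∑ i, x i * y i

/-- `Cprod n k u = ∏_{j=k+1}^{n} cos(uʲ)` (zero-based: product of `cos (u j)` over `j ≥ k`). -/
def Cprod (n k : ℕ) (u : Fin n → ℂ) : ℂ :=
  ∏ j ∈ Finset.univ.filter (fun j : Fin n => k ≤ (j : ℕ)), Complex.cos (u j)

/-- Spherical-coordinate parametrization of the quadric `∑ xⱼ²/aⱼ = 1` (with `bⱼ² = aⱼ`). -/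
def sphX (n : ℕ) (b : Fin (n+1) → ℂ) (u : Fin n → ℂ) : Fin (n+1) → ℂ :=
  Fin.cons (b 0 * Cprod n 0 u)
    (fun k : Fin n => b k.succ * Cprod n (k.val + 1) u * Complex.sin (u k))

/-- The normal field `N(u) = (b₀⁻¹C₀(u), b₁⁻¹C₁(u)sin u¹, …, bₙ⁻¹Cₙ(u)sin uⁿ)`. -/
def sphN (n : ℕ) (b : Fin (n+1) → ℂ) (u : Fin n → ℂ) : Fin (n+1) → ℂ :=
  Fin.cons ((b 0)⁻¹ * Cprod n 0 u)
    (fun k : Fin n => (b k.succ)⁻¹ * Cprod n (k.val + 1) u * Complex.sin (u k))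

/-- Directional (partial) derivative along the j-th standard basis vector of ℂⁿ. -/
def pd {n m : ℕ} (j : Fin n) (F : (Fin n → ℂ) → (Fin m → ℂ)) :
    (Fin n → ℂ) → (Fin m → ℂ) :=
  fun u => fderiv ℂ F u (Pi.single j 1)

/-!
With `S := sphX n 1` the unit sphere, `X = b * S` and `N = b⁻¹ * S` componentwise, so both
pairings are pairings of `S` with its own derivatives. Differentiating `⟨S, S⟩ = 1` gives
`⟨S, ∂ⱼS⟩ = 0`, and differentiating that once more gives `⟨S, ∂ⱼ∂ₖS⟩ = -⟨∂ⱼS, ∂ₖS⟩`. The first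
fundamental form `⟨∂ⱼS, ∂ₖS⟩ = δⱼₖ Cₖ²` follows by induction on `n` from the recursion
`S(u, t) = (cos t • S(u), sin t)` in the last coordinate.
-/

lemma cdot_comm {m : ℕ} (x y : Fin m → ℂ) : cdot x y = cdot y x := by
  simp only [cdot, mul_comm]

lemma cdot_snoc {m : ℕ} (x y : Fin m → ℂ) (s t : ℂ) :
    cdot (Fin.snoc x s : Fin (m+1) → ℂ) (Fin.snoc y t) = cdot x y + s * t := by
  simp [cdot, Fin.sum_univ_castSucc]

lemma cdot_smul_smul {m : ℕ} (c d : ℂ) (x y : Fin m → ℂ) :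
    cdot (c • x) (d • y) = c * d * cdot x y := by
  simp only [cdot, Finset.mul_sum, Pi.smul_apply, smul_eq_mul]
  exact Finset.sum_congr rfl fun _ _ => by ring

lemma cdot_inv_mul_mul {m : ℕ} {b : Fin m → ℂ} (hb : ∀ i, b i ≠ 0) (x y : Fin m → ℂ) :
    cdot (b⁻¹ * x) (b * y) = cdot x y := by
  simp only [cdot, Pi.mul_apply, Pi.inv_apply]
  exact Finset.sum_congr rfl fun i _ => by field_simp [hb i]

section Calculus

variable {E : Type*} [NormedAddCommGroup E] [NormedSpace ℂ E] {m : ℕ}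

lemma HasFDerivAt.cdot {F G : E → Fin m → ℂ} {F' G' : E →L[ℂ] Fin m → ℂ} {x : E}
    (hF : HasFDerivAt F F' x) (hG : HasFDerivAt G G' x) :
    HasFDerivAt (fun y => cdot (F y) (G y))
      (∑ i, (F x i • (ContinuousLinearMap.proj i).comp G'
        + G x i • (ContinuousLinearMap.proj i).comp F')) x :=
  HasFDerivAt.fun_sum fun i _ => (hasFDerivAt_pi'.1 hF i).mul (hasFDerivAt_pi'.1 hG i)

lemma fderiv_cdot_apply {F G : E → Fin m → ℂ} {x : E}
    (hF : DifferentiableAt ℂ F x) (hG : DifferentiableAt ℂ G x) (v : E) :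
    fderiv ℂ (fun y => cdot (F y) (G y)) x v
      = cdot (fderiv ℂ F x v) (G x) + cdot (F x) (fderiv ℂ G x v) := by
  rw [(hF.hasFDerivAt.cdot hG.hasFDerivAt).fderiv]
  simp only [cdot, ← Finset.sum_add_distrib]
  simp [add_comm, mul_comm]

end Calculus

variable {n m : ℕ}

lemma cdot_pd_add_cdot_pd_of_const {F G : (Fin n → ℂ) → Fin m → ℂ} {c : ℂ}
    (hF : Differentiable ℂ F) (hG : Differentiable ℂ G) (hc : ∀ u, cdot (F u) (G u) = c)
    (j : Fin n) (u : Fin n → ℂ) :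
    cdot (pd j F u) (G u) + cdot (F u) (pd j G u) = 0 := by
  have hconst : (fun u => cdot (F u) (G u)) = fun _ => c := funext hc
  have h := fderiv_cdot_apply (hF u) (hG u) (Pi.single j 1)
  rw [hconst, fderiv_const_apply] at h
  exact h.symm

lemma DifferentiableAt.hasDerivAt_update_pd {F : (Fin n → ℂ) → Fin m → ℂ} {u : Fin n → ℂ}
    (hF : DifferentiableAt ℂ F u) (j : Fin n) :
    HasDerivAt (fun t => F (Function.update u j t)) (pd j F u) (u j) :=
  hF.hasFDerivAt.comp_hasDerivAt_of_eq (u j) (hasDerivAt_update u j (u j))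
    (Function.update_eq_self j u).symm

lemma pd_eq_of_hasDerivAt {F : (Fin n → ℂ) → Fin m → ℂ} {u : Fin n → ℂ} {j : Fin n}
    {F' : Fin m → ℂ} (hF : DifferentiableAt ℂ F u)
    (h : HasDerivAt (fun t => F (Function.update u j t)) F' (u j)) : pd j F u = F' :=
  (hF.hasDerivAt_update_pd j).unique h

lemma pd_const_mul {F : (Fin n → ℂ) → Fin m → ℂ} (hF : Differentiable ℂ F) (c : Fin m → ℂ)
    (j : Fin n) : pd j (fun u => c * F u) = fun u => c * pd j F u := by
  funext u
  simp [pd, fderiv_const_mul (hF u)]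

lemma hasDerivAt_snoc {f : ℂ → Fin m → ℂ} {g : ℂ → ℂ} {f' : Fin m → ℂ} {g' x : ℂ}
    (hf : HasDerivAt f f' x) (hg : HasDerivAt g g' x) :
    HasDerivAt (fun t => (Fin.snoc (f t) (g t) : Fin (m+1) → ℂ)) (Fin.snoc f' g') x := by
  refine hasDerivAt_pi.2 fun i => Fin.lastCases ?_ (fun i => ?_) i
  · simpa using hg
  · simpa using hasDerivAt_pi.1 hf i

lemma Cprod_eq_prod_ite (k : ℕ) (u : Fin n → ℂ) :
    Cprod n k u = ∏ j : Fin n, if k ≤ (j : ℕ) then cos (u j) else 1 :=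
  Finset.prod_filter _ _

lemma Cprod_succ {k : ℕ} (hk : k ≤ n) (u : Fin (n+1) → ℂ) :
    Cprod (n+1) k u = Cprod n k (Fin.init u) * cos (u (Fin.last n)) := by
  simp [Cprod_eq_prod_ite, Fin.prod_univ_castSucc, hk, Fin.init]

lemma Cprod_self (u : Fin n → ℂ) : Cprod n n u = 1 := by
  simp [Cprod_eq_prod_ite, fun j : Fin n => not_le.2 j.isLt]

lemma contDiff_Cprod (k : ℕ) {r : WithTop ℕ∞} : ContDiff ℂ r (Cprod n k) :=
  contDiff_prod fun j _ => Complex.contDiff_cos.comp (contDiff_apply ℂ ℂ j)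

lemma contDiff_sphX (b : Fin (n+1) → ℂ) {r : WithTop ℕ∞} : ContDiff ℂ r (sphX n b) := by
  refine contDiff_pi.2 fun i => Fin.cases ?_ (fun k => ?_) i
  · simpa [sphX] using contDiff_const.mul (contDiff_Cprod (n := n) 0 (r := r))
  · simpa [sphX] using (contDiff_const.mul (contDiff_Cprod (n := n) (k + 1) (r := r))).mul
      (Complex.contDiff_sin.comp (contDiff_apply ℂ ℂ k))

lemma sphX_eq_mul (b : Fin (n+1) → ℂ) (u : Fin n → ℂ) : sphX n b u = b * sphX n 1 u := by
  funext i
  refine Fin.cases ?_ (fun k => ?_) i <;> simp [sphX, mul_assoc]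

lemma sphN_eq_inv_mul (b : Fin (n+1) → ℂ) (u : Fin n → ℂ) : sphN n b u = b⁻¹ * sphX n 1 u := by
  funext i
  refine Fin.cases ?_ (fun k => ?_) i <;> simp [sphN, sphX, mul_assoc]

lemma sphX_one_succ (u : Fin (n+1) → ℂ) :
    sphX (n+1) 1 u
      = Fin.snoc (cos (u (Fin.last n)) • sphX n 1 (Fin.init u)) (sin (u (Fin.last n))) := by
  funext i
  refine Fin.lastCases ?_ (fun i => Fin.cases ?_ (fun k => ?_) i) i
  · simp [sphX, Cprod_self]
  · simp [sphX, Cprod_succ, mul_comm]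
  · rw [Fin.snoc_castSucc]
    simp [sphX, Cprod_succ, Fin.init, k.isLt, mul_comm, mul_left_comm]

lemma differentiable_sphX (b : Fin (n+1) → ℂ) : Differentiable ℂ (sphX n b) :=
  (contDiff_sphX b (r := 1)).differentiable one_ne_zero

lemma differentiable_pd_sphX (b : Fin (n+1) → ℂ) (k : Fin n) :
    Differentiable ℂ (pd k (sphX n b)) :=
  (((contDiff_sphX b (r := 2)).fderiv_right (m := 1) le_rfl).clm_apply
    contDiff_const).differentiable one_ne_zero

lemma pd_castSucc_sphX_one (j : Fin n) (u : Fin (n+1) → ℂ) :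
    pd j.castSucc (sphX (n+1) 1) u
      = Fin.snoc (cos (u (Fin.last n)) • pd j (sphX n 1) (Fin.init u)) 0 := by
  refine pd_eq_of_hasDerivAt (differentiable_sphX 1 u) ?_
  have hline : (fun t => sphX (n+1) 1 (Function.update u j.castSucc t)) = fun t =>
      Fin.snoc (cos (u (Fin.last n)) • sphX n 1 (Function.update (Fin.init u) j t))
        (sin (u (Fin.last n))) := by
    funext t
    rw [sphX_one_succ, Fin.init_update_castSucc,
      Function.update_of_ne (Fin.castSucc_lt_last j).ne']
  rw [hline]
  exact hasDerivAt_snoc (((differentiable_sphX 1 _).hasDerivAt_update_pd j).fun_const_smul _)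
    (hasDerivAt_const _ _)

lemma pd_last_sphX_one (u : Fin (n+1) → ℂ) :
    pd (Fin.last n) (sphX (n+1) 1) u
      = Fin.snoc (-sin (u (Fin.last n)) • sphX n 1 (Fin.init u)) (cos (u (Fin.last n))) := by
  refine pd_eq_of_hasDerivAt (differentiable_sphX 1 u) ?_
  have hline : (fun t => sphX (n+1) 1 (Function.update u (Fin.last n) t)) = fun t =>
      Fin.snoc (cos t • sphX n 1 (Fin.init u)) (sin t) := by
    funext t
    rw [sphX_one_succ, Fin.init_update_last, Function.update_self]
  rw [hline]
  exact hasDerivAt_snoc ((hasDerivAt_cos _).smul_const _) (hasDerivAt_sin _)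

lemma cdot_sphX_one_self (u : Fin n → ℂ) : cdot (sphX n 1 u) (sphX n 1 u) = 1 := by
  induction n with
  | zero => simp [cdot, sphX, Cprod_self]
  | succ n ih =>
    rw [sphX_one_succ, cdot_snoc, cdot_smul_smul, ih]
    linear_combination sin_sq_add_cos_sq (u (Fin.last n))

lemma cdot_sphX_one_pd (j : Fin n) (u : Fin n → ℂ) :
    cdot (sphX n 1 u) (pd j (sphX n 1) u) = 0 := by
  have h := cdot_pd_add_cdot_pd_of_const (differentiable_sphX 1) (differentiable_sphX 1)
    cdot_sphX_one_self j u
  rw [cdot_comm] at h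
  linear_combination h / 2

lemma cdot_pd_sphX_one_pd (j k : Fin n) (u : Fin n → ℂ) :
    cdot (pd j (sphX n 1) u) (pd k (sphX n 1) u)
      = if j = k then Cprod n (k.val + 1) u ^ 2 else 0 := by
  induction n with
  | zero => exact j.elim0
  | succ n ih =>
    induction j using Fin.lastCases with
    | last =>
      induction k using Fin.lastCases with
      | last =>
        rw [pd_last_sphX_one, cdot_snoc, cdot_smul_smul, cdot_sphX_one_self, if_pos rfl,
          Fin.val_last, Cprod_self]
        linear_combination sin_sq_add_cos_sq (u (Fin.last n))
      | cast k =>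
        rw [pd_last_sphX_one, pd_castSucc_sphX_one, cdot_snoc, cdot_smul_smul,
          cdot_sphX_one_pd, if_neg (Fin.castSucc_lt_last k).ne']
        ring
    | cast j =>
      induction k using Fin.lastCases with
      | last =>
        rw [pd_last_sphX_one, pd_castSucc_sphX_one, cdot_snoc, cdot_smul_smul, cdot_comm,
          cdot_sphX_one_pd, if_neg (Fin.castSucc_lt_last j).ne]
        ring
      | cast k =>
        rw [pd_castSucc_sphX_one, pd_castSucc_sphX_one, cdot_snoc, cdot_smul_smul, ih,
          Fin.val_castSucc, Cprod_succ k.isLt]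
        simp only [Fin.castSucc_inj]
        split_ifs <;> ring

lemma cdot_sphX_one_pd_pd (j k : Fin n) (u : Fin n → ℂ) :
    cdot (sphX n 1 u) (pd j (pd k (sphX n 1)) u)
      = -(if j = k then Cprod n (k.val + 1) u ^ 2 else 0) := by
  have h := cdot_pd_add_cdot_pd_of_const (differentiable_sphX 1) (differentiable_pd_sphX 1 k)
    (cdot_sphX_one_pd k) j u
  rw [← cdot_pd_sphX_one_pd]
  linear_combination h

theorem stmt6_general (n : ℕ) (a b : Fin (n+1) → ℂ)
    (ha : ∀ j, a j ≠ 0) (hb : ∀ j, (b j)^2 = a j) :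
    ∀ u : Fin n → ℂ,
      (∀ j : Fin n, cdot (sphN n b u) (pd j (sphX n b) u) = 0) ∧
      (∀ j k : Fin n, cdot (sphN n b u) (pd j (pd k (sphX n b)) u)
        = -(if j = k then (Cprod n (k.val + 1) u)^2 else 0)) := by
  have hb0 : ∀ j, b j ≠ 0 := fun j h => ha j (by rw [← hb j, h, zero_pow two_ne_zero])
  have hX : sphX n b = fun u => b * sphX n 1 u := funext (sphX_eq_mul b)
  intro u
  rw [sphN_eq_inv_mul, hX]
  refine ⟨fun j => ?_, fun j k => ?_⟩
  · rw [pd_const_mul (differentiable_sphX 1), cdot_inv_mul_mul hb0, cdot_sphX_one_pd]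
  · rw [pd_const_mul (differentiable_sphX 1), pd_const_mul (differentiable_pd_sphX 1 k),
      cdot_inv_mul_mul hb0, cdot_sphX_one_pd_pd]

/-- `N` is a normal field of the quadric `X` whose second fundamental
form is diagonal with entries `−Cₖ²`:
`⟨N, ∂ⱼX⟩ = 0` and `⟨N, ∂ⱼ∂ₖX⟩ = −δ_{jk} Cₖ(u)²`. -/
theorem stmt6 (n : ℕ) (hn : 2 ≤ n) (a b : Fin (n+1) → ℂ)
    (ha : ∀ j, a j ≠ 0) (hb : ∀ j, (b j)^2 = a j) :
    ∀ u : Fin n → ℂ,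
      (∀ j : Fin n, cdot (sphN n b u) (pd j (sphX n b) u) = 0) ∧
      (∀ j k : Fin n, cdot (sphN n b u) (pd j (pd k (sphX n b)) u)
        = -(if j = k then (Cprod n (k.val + 1) u)^2 else 0)) :=
  stmt6_general n a b ha hb
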